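/- arXiv:2204.08045 — 4 statements merged into one kernel-verified Lean document; each statement's English description precedes it below -/
import Mathlib

section
/- Let f ∈ ℂ[[x,y,z,t]] be such that, with respect to the weights (4,3,2,1) for (x,y,z,t), one has wt f = 6, and such that f is contact equivalent to x³ + y⁴ + z² + t² (i.e. f defines an E₆-singularity). Then the coefficient of the monomial xz in f is zero. -/
noncomputable section

open MvPowerSeries

def ContactEquiv (f g : MvPowerSeries (Fin 4) ℂ) : Prop :=
  ∃ (Φ : MvPowerSeries (Fin 4) ℂ ≃ₐ[ℂ] MvPowerSeries (Fin 4) ℂ)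
    (u : (MvPowerSeries (Fin 4) ℂ)ˣ), g = (u : MvPowerSeries (Fin 4) ℂ) * Φ f

/-!
Put `Ψ = Φ⁻¹` and `xᵢ = Ψ (Xᵢ)`. Then `Ψ u * f = F := x₀³ + x₁⁴ + g h` with `g, h = x₂ ± i x₃`,
so `F` has weight `≥ 6` as well, and since `f = Ψ u⁻¹ * F` it suffices that the coefficients of
`F` at the monomials dividing `xz` vanish. All but the last have weight `< 6`; the
`xz`-coefficient of `F` is `g_x h_z + g_z h_x` in terms of the linear parts of `g` and `h`.
If `t` occurs linearly in `g` or `h`, the vanishing of the coefficients of `t²`, `zt`, `xt` in `F`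
kills it. Otherwise `t` occurs linearly in `x₀` or `x₁`, because `Ψ` is an automorphism; the
coefficient of `t³` rules out `x₀`, and then the coefficients of `t⁴`, `zt²` and `z²` force
`g_z = h_z = 0`.
-/

open Finsupp

theorem Finsupp.eq_single_add_single_of_le {σ : Type*} {i j : σ} (hij : i ≠ j) {a b : ℕ}
    {u : σ →₀ ℕ} (hu : u ≤ single i a + single j b) : u = single i (u i) + single j (u j) := by
  classical
  ext k
  have := hu k
  by_cases hki : k = i
  · subst hki; simp [hij]
  · by_cases hkj : k = j
    · subst hkj; simp [hij.symm]
    · simp_all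

namespace MvPowerSeries

variable {σ R : Type*} [CommSemiring R]

theorem coeff_single_mul (i : σ) (n : ℕ) (p q : MvPowerSeries σ R) :
    coeff (single i n) (p * q) =
      ∑ x ∈ Finset.HasAntidiagonal.antidiagonal n,
        coeff (single i x.1) p * coeff (single i x.2) q := by
  classical
  rw [coeff_mul, antidiagonal_single, Finset.sum_map]
  rfl

theorem coeff_single_add_single_mul {i j : σ} (hij : i ≠ j) (a b : ℕ) (p q : MvPowerSeries σ R) :
    coeff (single i a + single j b) (p * q) =
      ∑ x ∈ Finset.HasAntidiagonal.antidiagonal a, ∑ y ∈ Finset.HasAntidiagonal.antidiagonal b,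
        coeff (single i x.1 + single j y.1) p * coeff (single i x.2 + single j y.2) q := by
  classical
  rw [coeff_mul, ← Finset.sum_product']
  symm
  refine Finset.sum_nbij' (fun xy => (single i xy.1.1 + single j xy.2.1,
      single i xy.1.2 + single j xy.2.2)) (fun uv => ((uv.1 i, uv.2 i), (uv.1 j, uv.2 j)))
    ?_ ?_ ?_ ?_ (fun _ _ => rfl)
  · rintro ⟨⟨x₁, x₂⟩, ⟨y₁, y₂⟩⟩ h
    simp only [Finset.mem_product, Finset.HasAntidiagonal.mem_antidiagonal] at h ⊢
    rw [add_add_add_comm, ← single_add, ← single_add, h.1, h.2]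
  · rintro ⟨u, v⟩ h
    simp only [Finset.mem_product, Finset.HasAntidiagonal.mem_antidiagonal] at h ⊢
    have hi := DFunLike.congr_fun h i
    have hj := DFunLike.congr_fun h j
    simp only [Finsupp.add_apply, single_eq_same, single_eq_of_ne hij, single_eq_of_ne hij.symm,
      add_zero, zero_add] at hi hj
    exact ⟨hi, hj⟩
  · rintro ⟨⟨x₁, x₂⟩, ⟨y₁, y₂⟩⟩ -
    simp [hij, hij.symm]
  · rintro ⟨u, v⟩ h
    rw [Finset.HasAntidiagonal.mem_antidiagonal] at h
    have hu : u ≤ single i a + single j b := h ▸ le_self_add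
    have hv : v ≤ single i a + single j b := h ▸ le_add_self
    exact Prod.ext (eq_single_add_single_of_le hij hu).symm (eq_single_add_single_of_le hij hv).symm

theorem coeff_eq_zero_of_weight_lt {p : MvPowerSeries σ R} {w : σ → ℕ} {n : ℕ}
    (hp : n ≤ p.weightedOrder w) {d : σ →₀ ℕ} (hd : weight w d < n) : coeff d p = 0 :=
  coeff_eq_zero_of_lt_weightedOrder w ((Nat.cast_lt.mpr hd).trans_le hp)

theorem coeff_single_one_mul (i : σ) (p q : MvPowerSeries σ R) :
    coeff (single i 1) (p * q) =
      constantCoeff p * coeff (single i 1) q + coeff (single i 1) p * constantCoeff q := by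
  simp [coeff_single_mul, Finset.Nat.antidiagonal_succ]

theorem coeff_pow_eq_zero_of_degree_lt {A : MvPowerSeries σ R} (hA : constantCoeff A = 0) {n : ℕ}
    {d : σ →₀ ℕ} (hd : degree d < n) : coeff d (A ^ n) = 0 :=
  coeff_of_lt_order ((Nat.cast_lt.mpr hd).trans_le (le_order_pow_of_constantCoeff_eq_zero n hA))

theorem coeff_mul_eq_zero_of_forall_le {p q : MvPowerSeries σ R} {n : σ →₀ ℕ}
    (h : ∀ m ≤ n, coeff m q = 0) : coeff n (p * q) = 0 := by
  classical
  rw [coeff_mul]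
  refine Finset.sum_eq_zero fun x hx => ?_
  rw [h x.2 (Finset.HasAntidiagonal.mem_antidiagonal.mp hx ▸ le_add_self), mul_zero]

section ZeroConstantCoeff

variable {p q : MvPowerSeries σ R} (hp : constantCoeff p = 0) (hq : constantCoeff q = 0) {i j : σ}
include hp hq

theorem coeff_single_two_mul :
    coeff (single i 2) (p * q) = coeff (single i 1) p * coeff (single i 1) q := by
  simp [coeff_single_mul, Finset.Nat.antidiagonal_succ, hp, hq]

theorem coeff_single_three_mul :
    coeff (single i 3) (p * q) = coeff (single i 1) p * coeff (single i 2) q +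
      coeff (single i 2) p * coeff (single i 1) q := by
  simp [coeff_single_mul, Finset.Nat.antidiagonal_succ, hp, hq]

theorem coeff_single_four_mul :
    coeff (single i 4) (p * q) = coeff (single i 1) p * coeff (single i 3) q +
      coeff (single i 2) p * coeff (single i 2) q +
      coeff (single i 3) p * coeff (single i 1) q := by
  simp [coeff_single_mul, Finset.Nat.antidiagonal_succ, hp, hq]
  ring

theorem coeff_single_one_add_single_one_mul (hij : i ≠ j) :
    coeff (single i 1 + single j 1) (p * q) = coeff (single i 1) p * coeff (single j 1) q +
      coeff (single j 1) p * coeff (single i 1) q := by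
  simp [coeff_single_add_single_mul hij, Finset.Nat.antidiagonal_succ, hp, hq]
  ring

theorem coeff_single_one_add_single_two_mul (hij : i ≠ j) :
    coeff (single i 1 + single j 2) (p * q) = coeff (single i 1) p * coeff (single j 2) q +
      coeff (single j 1) p * coeff (single i 1 + single j 1) q +
      coeff (single i 1 + single j 1) p * coeff (single j 1) q +
      coeff (single j 2) p * coeff (single i 1) q := by
  simp [coeff_single_add_single_mul hij, Finset.Nat.antidiagonal_succ, hp, hq]
  ring

end ZeroConstantCoeff

theorem exists_eq_sum_X_mul [Fintype σ] {p : MvPowerSeries σ R} (hp : constantCoeff p = 0) :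
    ∃ q : σ → MvPowerSeries σ R, p = ∑ i, X i * q i := by
  classical
  rcases isEmpty_or_nonempty σ with hσ | hσ
  · refine ⟨0, ?_⟩
    ext d
    rw [Subsingleton.elim d 0, coeff_zero_eq_constantCoeff_apply, hp]
    simp
  -- each monomial `d ≠ 0` of `p` is put into the summand of one variable occurring in it
  let v : (σ →₀ ℕ) → σ := fun d => Classical.epsilon fun i => d i ≠ 0
  have hv (d : σ →₀ ℕ) (hd : d ≠ 0) : d (v d) ≠ 0 :=
    Classical.epsilon_spec (by simpa [Finsupp.ext_iff] using hd)
  let q (i : σ) : MvPowerSeries σ R := fun d =>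
    if v (d + single i 1) = i then coeff (d + single i 1) p else 0
  have hq (i : σ) (d : σ →₀ ℕ) :
      coeff d (X i * q i) = if d ≠ 0 ∧ v d = i then coeff d p else 0 := by
    rw [X, coeff_monomial_mul, one_mul]
    split_ifs with hle hd hd
    · rw [coeff_apply]
      simp only [q, tsub_add_cancel_of_le hle, if_pos hd.2]
    · rw [coeff_apply]
      simp only [q, tsub_add_cancel_of_le hle]
      rw [if_neg]
      rintro rfl
      exact hd ⟨fun h0 => by simp [h0] at hle, rfl⟩
    · exact absurd (single_le_iff.mpr (Nat.one_le_iff_ne_zero.mpr (hd.2 ▸ hv d hd.1))) hle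
    · rfl
  refine ⟨q, ?_⟩
  ext d
  simp only [map_sum, hq]
  by_cases hd : d = 0
  · simp [hd, hp]
  · simp [hd]

section Field

variable {K : Type*} [Field K]

theorem constantCoeff_map_eq_zero {F : Type*} [EquivLike F (MvPowerSeries σ K) (MvPowerSeries σ K)]
    [MulEquivClass F (MvPowerSeries σ K) (MvPowerSeries σ K)] (Ψ : F) {p : MvPowerSeries σ K}
    (hp : constantCoeff p = 0) : constantCoeff (Ψ p) = 0 := by
  have : ¬IsUnit p := by simp [isUnit_iff_constantCoeff, hp]
  rwa [← MulEquiv.isUnit_map Ψ, isUnit_iff_constantCoeff, isUnit_iff_ne_zero, not_not] at this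

theorem exists_coeff_single_algEquiv_X_ne_zero [Fintype σ]
    (Ψ : MvPowerSeries σ K ≃ₐ[K] MvPowerSeries σ K) (k : σ) :
    ∃ i, coeff (single k 1) (Ψ (X i)) ≠ 0 := by
  by_contra! h
  obtain ⟨q, hq⟩ := exists_eq_sum_X_mul (constantCoeff_map_eq_zero Ψ.symm (constantCoeff_X k))
  have hX : (X k : MvPowerSeries σ K) = ∑ i, Ψ (X i) * Ψ (q i) := by
    rw [← Ψ.apply_symm_apply (X k), hq, map_sum]
    simp only [map_mul]
  have := congrArg (coeff (single k 1)) hX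
  simp [coeff_single_one_mul, h, constantCoeff_map_eq_zero Ψ (constantCoeff_X _)] at this

end Field

end MvPowerSeries

section E6Form

variable {σ R : Type*} [CommSemiring R]

-- `x³ + y⁴ + z² + t²` with `z² + t²` factored as `(z + it)(z - it)`
def e6Form (A B g h : MvPowerSeries σ R) : MvPowerSeries σ R := A ^ 3 + B ^ 4 + g * h

variable {A B g h : MvPowerSeries σ R} (hA : constantCoeff A = 0) (hB : constantCoeff B = 0)
  (hg : constantCoeff g = 0) (hh : constantCoeff h = 0) {i j : σ}
include hA hB hg hh

theorem coeff_single_one_add_single_one_e6Form (hij : i ≠ j) :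
    coeff (single i 1 + single j 1) (e6Form A B g h) =
      coeff (single i 1) g * coeff (single j 1) h +
      coeff (single j 1) g * coeff (single i 1) h := by
  have hdeg : degree (single i 1 + single j 1) = 2 := by simp [map_add]
  rw [e6Form, map_add, map_add, coeff_pow_eq_zero_of_degree_lt hA (by omega),
    coeff_pow_eq_zero_of_degree_lt hB (by omega), coeff_single_one_add_single_one_mul hg hh hij]
  ring

theorem coeff_single_two_e6Form :
    coeff (single i 2) (e6Form A B g h) = coeff (single i 1) g * coeff (single i 1) h := by
  rw [e6Form, map_add, map_add, coeff_pow_eq_zero_of_degree_lt hA (by simp),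
    coeff_pow_eq_zero_of_degree_lt hB (by simp), coeff_single_two_mul hg hh]
  ring

theorem coeff_single_three_e6Form :
    coeff (single i 3) (e6Form A B g h) = coeff (single i 1) A ^ 3 +
      coeff (single i 1) g * coeff (single i 2) h +
      coeff (single i 2) g * coeff (single i 1) h := by
  have hA2 : constantCoeff (A * A) = 0 := by simp [hA]
  rw [e6Form, map_add, map_add, coeff_pow_eq_zero_of_degree_lt hB (by simp),
    coeff_single_three_mul hg hh, pow_succ, sq, coeff_single_three_mul hA2 hA,
    coeff_single_two_mul hA hA, coeff_single_one_mul]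
  simp [hA]
  ring

theorem coeff_single_four_e6Form :
    coeff (single i 4) (e6Form A B g h) = 3 * coeff (single i 1) A ^ 2 * coeff (single i 2) A +
      coeff (single i 1) B ^ 4 + coeff (single i 1) g * coeff (single i 3) h +
      coeff (single i 2) g * coeff (single i 2) h +
      coeff (single i 3) g * coeff (single i 1) h := by
  have hA2 : constantCoeff (A * A) = 0 := by simp [hA]
  have hB2 : constantCoeff (B * B) = 0 := by simp [hB]
  rw [e6Form, map_add, map_add, coeff_single_four_mul hg hh, pow_succ, sq,
    coeff_single_four_mul hA2 hA, coeff_single_three_mul hA hA, coeff_single_two_mul hA hA,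
    coeff_single_one_mul, show B ^ 4 = (B * B) * (B * B) by ring, coeff_single_four_mul hB2 hB2,
    coeff_single_three_mul hB hB, coeff_single_two_mul hB hB, coeff_single_one_mul]
  simp [hA, hB]
  ring

theorem coeff_single_one_add_single_two_e6Form (hij : i ≠ j) :
    coeff (single i 1 + single j 2) (e6Form A B g h) =
      3 * coeff (single j 1) A ^ 2 * coeff (single i 1) A +
      coeff (single i 1) g * coeff (single j 2) h +
      coeff (single j 1) g * coeff (single i 1 + single j 1) h +
      coeff (single i 1 + single j 1) g * coeff (single j 1) h +
      coeff (single j 2) g * coeff (single i 1) h := by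
  have hA2 : constantCoeff (A * A) = 0 := by simp [hA]
  have hdeg : degree (single i 1 + single j 2) = 3 := by simp [map_add]
  rw [e6Form, map_add, map_add, coeff_pow_eq_zero_of_degree_lt hB (by omega),
    coeff_single_one_add_single_two_mul hg hh hij, pow_succ, sq,
    coeff_single_one_add_single_two_mul hA2 hA hij, coeff_single_two_mul hA hA,
    coeff_single_one_add_single_one_mul hA hA hij, coeff_single_one_mul, coeff_single_one_mul]
  simp [hA]
  ring

end E6Form

theorem e6Form_add_C_I_mul_sub_C_I_mul {σ : Type*} (A B P Q : MvPowerSeries σ ℂ) :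
    e6Form A B (P + C Complex.I * Q) (P - C Complex.I * Q) = A ^ 3 + B ^ 4 + P ^ 2 + Q ^ 2 := by
  have hI : (C Complex.I : MvPowerSeries σ ℂ) ^ 2 = -1 := by
    rw [← map_pow, Complex.I_sq, map_neg, map_one]
  rw [e6Form]
  linear_combination -Q ^ 2 * hI

theorem mul_add_mul_eq_zero_of_ne_zero {K : Type*} [CommRing K] [NoZeroDivisors K]
    {gx gz gt hx hz ht : K} (htt : gt * ht = 0) (hzt : gz * ht + gt * hz = 0)
    (hxt : gx * ht + gt * hx = 0) (hne : gt ≠ 0 ∨ ht ≠ 0) : gx * hz + gz * hx = 0 := by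
  rcases hne with hgt | hht
  · have hht : ht = 0 := (mul_eq_zero.mp htt).resolve_left hgt
    simp only [hht, mul_zero, zero_add, mul_eq_zero, hgt, false_or] at hzt hxt
    simp [hzt, hxt]
  · have hgt : gt = 0 := (mul_eq_zero.mp htt).resolve_right hht
    simp only [hgt, zero_mul, add_zero, mul_eq_zero, hht, or_false] at hzt hxt
    simp [hzt, hxt]

theorem eq_zero_and_eq_zero_of_mul_ne_zero {K : Type*} [CommRing K] [NoZeroDivisors K]
    {gz g2 hz h2 : K} (hzz : gz * hz = 0) (hz2 : gz * h2 + g2 * hz = 0) (h22 : g2 * h2 ≠ 0) :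
    gz = 0 ∧ hz = 0 := by
  have hg2 : g2 ≠ 0 := left_ne_zero_of_mul h22
  have hh2 : h2 ≠ 0 := right_ne_zero_of_mul h22
  rcases mul_eq_zero.mp hzz with hgz | hhz
  · simp_all
  · simp_all

theorem coeff_xz_e6Form_eq_zero {K : Type*} [CommRing K] [IsDomain K]
    {A B g h : MvPowerSeries (Fin 4) K} (hA : constantCoeff A = 0) (hB : constantCoeff B = 0)
    (hg : constantCoeff g = 0) (hh : constantCoeff h = 0)
    (ht : coeff (single 3 1) A ≠ 0 ∨ coeff (single 3 1) B ≠ 0 ∨ coeff (single 3 1) g ≠ 0 ∨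
      coeff (single 3 1) h ≠ 0)
    (hF : 6 ≤ (e6Form A B g h).weightedOrder ![4, 3, 2, 1]) :
    coeff (single 0 1 + single 2 1) (e6Form A B g h) = 0 := by
  have hvan (d : Fin 4 →₀ ℕ) (hd : weight ![4, 3, 2, 1] d < 6) := coeff_eq_zero_of_weight_lt hF hd
  have htt := hvan (single 3 2) (by simp [weight_single])
  have hzt := hvan (single 2 1 + single 3 1) (by simp [weight_single])
  have hxt := hvan (single 0 1 + single 3 1) (by simp [weight_single])
  have hzz := hvan (single 2 2) (by simp [weight_single])
  have httt := hvan (single 3 3) (by simp [weight_single])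
  have htttt := hvan (single 3 4) (by simp [weight_single])
  have hztt := hvan (single 2 1 + single 3 2) (by simp [weight_single])
  rw [coeff_single_two_e6Form hA hB hg hh] at htt hzz
  rw [coeff_single_one_add_single_one_e6Form hA hB hg hh (by decide)] at hzt hxt ⊢
  rw [coeff_single_three_e6Form hA hB hg hh] at httt
  rw [coeff_single_four_e6Form hA hB hg hh] at htttt
  rw [coeff_single_one_add_single_two_e6Form hA hB hg hh (by decide)] at hztt
  by_cases hgh : coeff (single 3 1) g ≠ 0 ∨ coeff (single 3 1) h ≠ 0
  · exact mul_add_mul_eq_zero_of_ne_zero htt hzt hxt hgh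
  push Not at hgh
  obtain ⟨hgt, hht⟩ := hgh
  have hat : coeff (single 3 1) A = 0 := by
    simpa [hgt, hht] using httt
  have hbt : coeff (single 3 1) B ≠ 0 := by simpa [hat, hgt, hht] using ht
  have h22 : coeff (single 3 2) g * coeff (single 3 2) h ≠ 0 := by
    intro h0
    apply hbt
    simpa [hat, hgt, hht, h0] using htttt
  have hzt2 : coeff (single 2 1) g * coeff (single 3 2) h +
      coeff (single 3 2) g * coeff (single 2 1) h = 0 := by
    simpa [hat, hgt, hht] using hztt
  obtain ⟨hgz, hhz⟩ := eq_zero_and_eq_zero_of_mul_ne_zero hzz hzt2 h22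
  simp [hgz, hhz]

theorem coeff_e6_eq_zero_of_le_xz (x : Fin 4 → MvPowerSeries (Fin 4) ℂ)
    (hx : ∀ i, constantCoeff (x i) = 0) (ht : ∃ i, coeff (single 3 1) (x i) ≠ 0)
    (hF : 6 ≤ (x 0 ^ 3 + x 1 ^ 4 + x 2 ^ 2 + x 3 ^ 2).weightedOrder ![4, 3, 2, 1])
    {m : Fin 4 →₀ ℕ} (hm : m ≤ single 0 1 + single 2 1) :
    coeff m (x 0 ^ 3 + x 1 ^ 4 + x 2 ^ 2 + x 3 ^ 2) = 0 := by
  set g := x 2 + C Complex.I * x 3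
  set h := x 2 - C Complex.I * x 3
  have hjac : coeff (single 3 1) (x 0) ≠ 0 ∨ coeff (single 3 1) (x 1) ≠ 0 ∨
      coeff (single 3 1) g ≠ 0 ∨ coeff (single 3 1) h ≠ 0 := by
    by_contra! hcon
    obtain ⟨h0, h1, hg, hh⟩ := hcon
    simp only [g, h, map_add, map_sub, coeff_C_mul] at hg hh
    have h2 : coeff (single 3 1) (x 2) = 0 := by linear_combination (hg + hh) / 2
    have h3 : coeff (single 3 1) (x 3) = 0 := by
      have : Complex.I * coeff (single 3 1) (x 3) = 0 := by linear_combination (hg - hh) / 2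
      simpa [Complex.I_ne_zero] using this
    obtain ⟨i, hi⟩ := ht
    fin_cases i <;> simp_all
  have hg : constantCoeff g = 0 := by simp [g, hx]
  have hh : constantCoeff h = 0 := by simp [h, hx]
  rw [← e6Form_add_C_I_mul_sub_C_I_mul] at hF ⊢
  have hm0 : m 0 ≤ 1 := by simpa using hm 0
  have hm2 : m 2 ≤ 1 := by simpa using hm 2
  rw [eq_single_add_single_of_le (by decide) hm]
  interval_cases (m 0) <;> interval_cases (m 2)
  · exact coeff_eq_zero_of_weight_lt hF (by simp)
  · exact coeff_eq_zero_of_weight_lt hF (by simp [weight_single])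
  · exact coeff_eq_zero_of_weight_lt hF (by simp [weight_single])
  · exact coeff_xz_e6Form_eq_zero (hx 0) (hx 1) hg hh hjac hF

/-- if `wt f = 6` w.r.t. the weights `(4,3,2,1)` for `(x,y,z,t)` and `f` defines
an `E₆`-singularity (is contact equivalent to `x³ + y⁴ + z² + t²`), then the coefficient of
the monomial `xz` in `f` is zero. -/
theorem stmt7 (f : MvPowerSeries (Fin 4) ℂ)
    (hwt : f.weightedOrder ![4, 3, 2, 1] = (6 : ℕ∞))
    (hE6 : ContactEquiv f
      ((X 0 : MvPowerSeries (Fin 4) ℂ) ^ 3 + X 1 ^ 4 + X 2 ^ 2 + X 3 ^ 2)) :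
    MvPowerSeries.coeff
      (Finsupp.single (0 : Fin 4) 1 + Finsupp.single (2 : Fin 4) 1) f = 0 := by
  obtain ⟨Φ, u, hu⟩ := hE6
  set x : Fin 4 → MvPowerSeries (Fin 4) ℂ := fun i => Φ.symm (X i)
  have hF : Φ.symm u * f = x 0 ^ 3 + x 1 ^ 4 + x 2 ^ 2 + x 3 ^ 2 := by
    simpa [x] using congrArg Φ.symm hu.symm
  have hwtF : 6 ≤ (x 0 ^ 3 + x 1 ^ 4 + x 2 ^ 2 + x 3 ^ 2).weightedOrder ![4, 3, 2, 1] := by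
    rw [← hF, ← hwt]
    exact le_add_self.trans (le_weightedOrder_mul _)
  have hf : f = Φ.symm ↑u⁻¹ * (x 0 ^ 3 + x 1 ^ 4 + x 2 ^ 2 + x 3 ^ 2) := by
    rw [← hF, ← mul_assoc, ← map_mul, Units.inv_mul, map_one, one_mul]
  rw [hf]
  exact coeff_mul_eq_zero_of_forall_le fun m hm => coeff_e6_eq_zero_of_le_xz x
    (fun i => constantCoeff_map_eq_zero Φ.symm (constantCoeff_X i))
    (exists_coeff_single_algEquiv_X_ne_zero Φ.symm 3) hwtF hm
end
end

section
/- Let n, a, a′ be positive integers with a′ ≤ a. Let g ∈ ℂ[[z,t]] be a non-zero power series whose order (smallest total degree of a monomial with non-zero coefficient) is n + 1 and whose weight with respect to the weights (a,1) for (z,t) equals a(n+1). Then the weight of g with respect to the weights (a′,1) equals a′(n+1). -/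
/-!
Write `m = n + 1`. A monomial `z^i t^j` of `g` has `a i + j ≥ a m`; if `i < m` this gives
`j ≥ a (m - i) ≥ a' (m - i)`, so its `(a',1)`-weight is at least `a' m` as well. For the reverse
bound we may assume `a' < a`, so `a ≥ 2`; then a monomial of `g` of degree `m`, which exists since
`ord g = m`, has `(a,1)`-weight at least `a m` only if it is `z^m`, whose `(a',1)`-weight is `a' m`.
-/

open MvPowerSeries Finsupp

namespace MvPowerSeries

variable {R : Type*} [Semiring R] {f : MvPowerSeries (Fin 2) R}

lemma weight_fin_two (a b : ℕ) (d : Fin 2 →₀ ℕ) : weight ![a, b] d = a * d 0 + b * d 1 := by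
  simp [weight_eq_sum, Fin.sum_univ_two, mul_comm]

lemma degree_fin_two (d : Fin 2 →₀ ℕ) : degree d = d 0 + d 1 := by
  simp [degree_eq_weight_one, weight_eq_sum, Fin.sum_univ_two]

theorem mul_le_weightedOrder_of_le {a a' m : ℕ} (haa : a' ≤ a)
    (h : ((a * m : ℕ) : ℕ∞) ≤ f.weightedOrder ![a, 1]) :
    ((a' * m : ℕ) : ℕ∞) ≤ f.weightedOrder ![a', 1] := by
  refine le_weightedOrder _ fun d hd ↦ coeff_eq_zero_of_lt_weightedOrder _ (lt_of_lt_of_le ?_ h)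
  rw [weight_fin_two, one_mul] at hd ⊢
  norm_cast at hd ⊢
  rcases le_or_gt m (d 0) with hm | hm
  · nlinarith
  · obtain ⟨k, rfl⟩ := Nat.exists_eq_add_of_lt hm
    nlinarith

theorem coeff_single_zero_ne_zero_of_order_eq {a m : ℕ} (ha : 2 ≤ a)
    (horder : f.order = m) (hwt : ((a * m : ℕ) : ℕ∞) ≤ f.weightedOrder ![a, 1]) :
    coeff (single 0 m) f ≠ 0 := by
  obtain ⟨⟨d, hd, hdeg⟩, -⟩ := order_eq_nat.mp horder
  have hweight : a * m ≤ a * d 0 + d 1 := by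
    have := hwt.trans (weightedOrder_le ![a, 1] hd)
    rw [weight_fin_two, one_mul] at this
    exact_mod_cast this
  rw [degree_fin_two] at hdeg
  have hd1 : d 1 = 0 := by
    subst hdeg
    nlinarith
  convert hd
  ext i
  fin_cases i <;> simp [hd1, ← hdeg]

end MvPowerSeries

theorem stmt11_general (n a a' : ℕ) (ha' : 0 < a') (haa : a' ≤ a)
    (g : MvPowerSeries (Fin 2) ℂ)
    (horder : g.order = ((n + 1 : ℕ) : ℕ∞))
    (hwt : g.weightedOrder ![a, 1] = ((a * (n + 1) : ℕ) : ℕ∞)) :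
    g.weightedOrder ![a', 1] = ((a' * (n + 1) : ℕ) : ℕ∞) := by
  rcases haa.eq_or_lt with rfl | hlt
  · exact hwt
  refine le_antisymm ?_ (mul_le_weightedOrder_of_le haa hwt.ge)
  have hz := coeff_single_zero_ne_zero_of_order_eq (by omega) horder hwt.ge
  simpa [weight_fin_two, mul_comm] using weightedOrder_le ![a', 1] hz

/-- let `n, a, a′` be positive integers with `a′ ≤ a` and let
`g ∈ ℂ[[z,t]]` be non-zero with order `n + 1` and weight `a(n+1)` w.r.t. the weights
`(a,1)` for `(z,t)`. Then the weight of `g` w.r.t. the weights `(a′,1)` is `a′(n+1)`. -/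
theorem stmt11 (n a a' : ℕ) (hn : 0 < n) (ha : 0 < a) (ha' : 0 < a') (haa : a' ≤ a)
    (g : MvPowerSeries (Fin 2) ℂ) (hg : g ≠ 0)
    (horder : g.order = ((n + 1 : ℕ) : ℕ∞))
    (hwt : g.weightedOrder ![a, 1] = ((a * (n + 1) : ℕ) : ℕ∞)) :
    g.weightedOrder ![a', 1] = ((a' * (n + 1) : ℕ) : ℕ∞) :=
  stmt11_general n a a' ha' haa g horder hwt
end

section
/- Let u, v, w ∈ ℂ with u² = 1 and v² + w² = 1. Then in the polynomial ring ℂ[x,y,z,t] the identity (v·x + w·y + ((v−1)/2)·t²)² + (u·w·x − u·v·y + (u·w/2)·t²)² + z³ + (v·x + w·y + ((v−1)/2)·t²)·t² = x² + y² + z³ + x·t² holds. Equivalently, the ℂ-algebra endomorphism Ψ_{u,v,w} of ℂ[x,y,z,t] determined by x ↦ v·x + w·y + ((v−1)/2)·t², y ↦ u·w·x − u·v·y + (u·w/2)·t², z ↦ z, t ↦ t fixes the polynomial x² + y² + z³ + x·t². -/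
/-!
With `h = 1/2` and `s = t²`, completing the square gives `x² + x s = (x + h s)² - h² s²`,
and the substitution sends `x + h s` to `v (x + h s) + w y` and `y` to `u (w (x + h s) - v y)`.
Since `u² = 1` and `v² + w² = 1`, this linear map in the variables `(x + h s, y)` is orthogonal,
so it preserves `(x + h s)² + y²`, hence `x² + y² + x s`.
-/

open MvPolynomial

section CommRing

variable {R : Type*} [CommRing R]

theorem sq_add_mul_eq_sq_sub_sq {h : R} (hh : 2 * h = 1) (x s : R) :
    x ^ 2 + x * s = (x + h * s) ^ 2 - (h * s) ^ 2 := by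
  linear_combination (-(x * s)) * hh

theorem sq_add_sq_orthogonal {u v w : R} (hu : u ^ 2 = 1) (hvw : v ^ 2 + w ^ 2 = 1) (a b : R) :
    (v * a + w * b) ^ 2 + (u * (w * a - v * b)) ^ 2 = a ^ 2 + b ^ 2 := by
  linear_combination (w * a - v * b) ^ 2 * hu + (a ^ 2 + b ^ 2) * hvw

theorem sq_add_sq_add_mul_substitution {u v w h : R} (hu : u ^ 2 = 1)
    (hvw : v ^ 2 + w ^ 2 = 1) (hh : 2 * h = 1) (x y s : R) :
    (v * x + w * y + (v - 1) * h * s) ^ 2 + (u * w * x - u * v * y + u * w * h * s) ^ 2 +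
        (v * x + w * y + (v - 1) * h * s) * s =
      x ^ 2 + y ^ 2 + x * s := by
  have hx : v * x + w * y + (v - 1) * h * s = v * (x + h * s) + w * y - h * s := by ring
  have hy : u * w * x - u * v * y + u * w * h * s = u * (w * (x + h * s) - v * y) := by ring
  rw [hx, hy]
  calc _ = (v * (x + h * s) + w * y) ^ 2 + (u * (w * (x + h * s) - v * y)) ^ 2 -
          (h * s) ^ 2 := by
        linear_combination (h * s - v * (x + h * s) - w * y) * s * hh
    _ = (x + h * s) ^ 2 + y ^ 2 - (h * s) ^ 2 := by rw [sq_add_sq_orthogonal hu hvw]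
    _ = x ^ 2 + y ^ 2 + x * s := by
        linear_combination (-1 : R) * sq_add_mul_eq_sq_sub_sq hh x s

end CommRing

/-- for `u, v, w ∈ ℂ` with `u² = 1` and `v² + w² = 1`, the substitution
`x ↦ vx + wy + ((v−1)/2)t²`, `y ↦ uwx − uvy + (uw/2)t²`, `z ↦ z`, `t ↦ t` fixes the
polynomial `x² + y² + z³ + xt²` in `ℂ[x,y,z,t]`; both as an explicit polynomial identity
and in terms of the ℂ-algebra endomorphism `Ψ_{u,v,w} = aeval` determined by it. -/
theorem stmt13 (u v w : ℂ) (hu : u ^ 2 = 1) (hvw : v ^ 2 + w ^ 2 = 1) :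
    ((C v * X 0 + C w * X 1 + C ((v - 1) / 2) * X 3 ^ 2 : MvPolynomial (Fin 4) ℂ) ^ 2 +
        (C (u * w) * X 0 - C (u * v) * X 1 + C (u * w / 2) * X 3 ^ 2) ^ 2 +
        X 2 ^ 3 +
        (C v * X 0 + C w * X 1 + C ((v - 1) / 2) * X 3 ^ 2) * X 3 ^ 2 =
      X 0 ^ 2 + X 1 ^ 2 + X 2 ^ 3 + X 0 * X 3 ^ 2) ∧
    (aeval
        ![(C v * X 0 + C w * X 1 + C ((v - 1) / 2) * X 3 ^ 2 : MvPolynomial (Fin 4) ℂ),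
          C (u * w) * X 0 - C (u * v) * X 1 + C (u * w / 2) * X 3 ^ 2,
          X 2, X 3]
        ((X 0 : MvPolynomial (Fin 4) ℂ) ^ 2 + X 1 ^ 2 + X 2 ^ 3 + X 0 * X 3 ^ 2) =
      (X 0 : MvPolynomial (Fin 4) ℂ) ^ 2 + X 1 ^ 2 + X 2 ^ 3 + X 0 * X 3 ^ 2) := by
  have identity := sq_add_sq_add_mul_substitution (u := C u) (v := C v) (w := C w)
    (h := C (1 / 2)) (by rw [← C_pow, hu, C_1])
    (by rw [← C_pow, ← C_pow, ← C_add, hvw, C_1]) (by rw [← map_ofNat C 2, ← C_mul]; norm_num)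
    (X 0) (X 1) (X 3 ^ 2 : MvPolynomial (Fin 4) ℂ)
  -- evaluating `aeval` turns the second conjunct into the first one
  simp only [map_add, map_mul, map_pow, aeval_X, Matrix.cons_val, and_self]
  rw [div_eq_mul_one_div (v - 1), div_eq_mul_one_div (u * w)]
  simp only [C_mul, C_sub, C_1]
  linear_combination identity
end

section
/- Let n ≥ 1, let f ∈ ℂ[[x₁,…,xₙ]], and let μ be a positive integer such that 𝔪^μ ⊆ j(f), where 𝔪 = (x₁,…,xₙ) is the maximal ideal and j(f) = (∂f/∂x₁,…,∂f/∂xₙ) is the Jacobian ideal. Let N ≥ μ + 1 be an integer, let h ∈ 𝔪^{N+1}, and let t₀ ∈ ℂ. In the ring R := ℂ[[x₁,…,xₙ,s]], set F := f + (t₀ + s)·h (viewing f and h as elements of R). Then the ideal of R generated by ∂F/∂x₁,…,∂F/∂xₙ equals the extension ideal j(f)·R generated by ∂f/∂x₁,…,∂f/∂xₙ. -/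
noncomputable section

/-- The formal partial derivative `∂f/∂xᵢ` of a multivariate formal power series. -/
def psDeriv {n : ℕ} (i : Fin n) (f : MvPowerSeries (Fin n) ℂ) : MvPowerSeries (Fin n) ℂ :=
  fun m => ((m i : ℂ) + 1) * MvPowerSeries.coeff (R := ℂ) (m + Finsupp.single i 1) f

/-- The maximal ideal `𝔪 = (x₁, …, xₙ)` of `ℂ[[x₁,…,xₙ]]`. -/
def maxIdeal (n : ℕ) : Ideal (MvPowerSeries (Fin n) ℂ) :=
  Ideal.span (Set.range (MvPowerSeries.X : Fin n → MvPowerSeries (Fin n) ℂ))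

/-- The Jacobian ideal `j(f) = (∂f/∂x₁, …, ∂f/∂xₙ)`. -/
def jacobianIdeal {n : ℕ} (f : MvPowerSeries (Fin n) ℂ) : Ideal (MvPowerSeries (Fin n) ℂ) :=
  Ideal.span (Set.range fun i : Fin n => psDeriv i f)

/-- The canonical inclusion `ℂ[[x₁,…,xₙ]] → R = ℂ[[x₁,…,xₙ,s]]`, where `s` is the last
variable of `Fin (n+1)`. -/
def liftPS {n : ℕ} (f : MvPowerSeries (Fin n) ℂ) : MvPowerSeries (Fin (n + 1)) ℂ :=
  fun m =>
    if m (Fin.last n) = 0 then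
      MvPowerSeries.coeff (R := ℂ)
        (Finsupp.comapDomain Fin.castSucc m (Fin.castSucc_injective n).injOn) f
    else 0

/-!
Differentiating `F = f + (t₀ + s) h` in `xᵢ` gives `∂F/∂xᵢ = ∂f/∂xᵢ + (t₀ + s) ∂h/∂xᵢ`, and
`∂h/∂xᵢ ∈ 𝔪^N ⊆ 𝔪 · 𝔪^μ ⊆ 𝔪 · j(f)`. So the generators of the two ideals differ by elements of
`𝔪R · j(f)R`; as `𝔪R` lies in the Jacobson radical of `R` and `j(f)R` is finitely generated,
Nakayama's lemma identifies the two ideals.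
-/

open MvPowerSeries Finsupp

theorem Derivation.map_mem_pow_of_mem_pow_succ {R A : Type*} [CommSemiring R] [CommSemiring A]
    [Algebra R A] (D : Derivation R A A) {I : Ideal A} :
    ∀ {k : ℕ} {a : A}, a ∈ I ^ (k + 1) → D a ∈ I ^ k
  | 0, _, _ => by simp
  | k + 1, a, ha => by
    rw [pow_succ'] at ha
    refine Submodule.mul_induction_on ha (fun x hx y hy => ?_) (fun x y hx hy => ?_)
    · rw [D.leibniz, smul_eq_mul, smul_eq_mul]
      refine add_mem ?_ (Ideal.mul_mem_right _ _ hy)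
      rw [pow_succ']
      exact Ideal.mul_mem_mul hx (D.map_mem_pow_of_mem_pow_succ hy)
    · rw [map_add]
      exact add_mem hx hy

theorem Ideal.span_range_eq_of_sub_mem_jacobson_bot_mul {A ι : Type*} [CommRing A] [Finite ι]
    {a b : ι → A} (hab : ∀ i, b i - a i ∈ (⊥ : Ideal A).jacobson * span (Set.range a)) :
    span (Set.range b) = span (Set.range a) := by
  have hba : ∀ i, b i - a i ∈ span (Set.range a) := fun i => mul_le_right (hab i)
  refine le_antisymm (span_le.mpr ?_) ?_
  · rintro _ ⟨i, rfl⟩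
    simpa using add_mem (hba i) (subset_span ⟨i, rfl⟩)
  · refine Submodule.le_of_le_smul_of_le_jacobson_bot (Submodule.fg_span (Set.finite_range a))
      le_rfl (span_le.mpr ?_)
    rintro _ ⟨i, rfl⟩
    rw [SetLike.mem_coe, ← sub_sub_cancel (b i) (a i), smul_eq_mul]
    exact sub_mem (Submodule.mem_sup_left (subset_span ⟨i, rfl⟩))
      (Submodule.mem_sup_right (hab i))

namespace MvPowerSeries

variable {σ τ R : Type*}

theorem pderiv_rename [CommSemiring R] (e : σ ↪ τ) (i : σ) (p : MvPowerSeries σ R) :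
    pderiv R (e i) (rename e p) = rename e (pderiv R i p) := by
  ext m
  by_cases hm : m ∈ Set.range (embDomain e)
  · obtain ⟨d, rfl⟩ := hm
    rw [coeff_pderiv, ← embDomain_single, ← embDomain_add, coeff_embDomain_rename,
      coeff_embDomain_rename, coeff_pderiv, embDomain_apply_self]
  · have hm' : m + single (e i) (1 : ℕ) ∉ Set.range (embDomain e) := fun h =>
      hm (isLowerSet_range_embDomain e le_self_add h)
    have hrange : Set.range (mapDomain (M := ℕ) e) = Set.range (embDomain e) := by
      congr 1; funext v; exact (embDomain_eq_mapDomain e v).symm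
    rw [coeff_pderiv, coeff_rename_eq_zero _ _ (hrange ▸ hm'), zero_mul,
      coeff_rename_eq_zero _ _ (hrange ▸ hm)]

theorem X_mem_jacobson_bot [CommRing R] (t : τ) :
    (X t : MvPowerSeries τ R) ∈ (⊥ : Ideal (MvPowerSeries τ R)).jacobson := by
  rw [Ideal.mem_jacobson_bot]
  intro y
  simp [isUnit_iff_constantCoeff]

end MvPowerSeries

theorem psDeriv_eq_pderiv {n : ℕ} (i : Fin n) (f : MvPowerSeries (Fin n) ℂ) :
    psDeriv i f = pderiv ℂ i f := by
  ext m
  rw [coeff_pderiv, mul_comm]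
  rfl

theorem liftPS_eq_rename {n : ℕ} (f : MvPowerSeries (Fin n) ℂ) :
    liftPS f = rename Fin.castSuccEmb f := by
  ext m
  change (if m (Fin.last n) = 0 then _ else _) = _
  split_ifs with hm
  · have hsupp : (m.support : Set (Fin (n + 1))) ⊆ Set.range (Fin.castSuccEmb (n := n)) := by
      intro j hj
      obtain ⟨i, rfl⟩ | rfl := Fin.eq_castSucc_or_eq_last j
      · exact ⟨i, rfl⟩
      · exact absurd hm (mem_support_iff.mp hj)
    conv_rhs => rw [← embDomain_comapDomain hsupp]
    rw [coeff_embDomain_rename]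
    rfl
  · refine (coeff_rename_eq_zero _ _ ?_).symm
    rintro ⟨d, rfl⟩
    exact hm (mapDomain_of_notMem_range _ _ fun ⟨i, hi⟩ => (Fin.castSucc_lt_last i).ne hi)

theorem map_rename_maxIdeal_le_jacobson_bot (n : ℕ) :
    (maxIdeal n).map (rename (R := ℂ) Fin.castSuccEmb) ≤ (⊥ : Ideal _).jacobson := by
  rw [maxIdeal, Ideal.map_span, Ideal.span_le]
  rintro _ ⟨_, ⟨i, rfl⟩, rfl⟩
  simpa using X_mem_jacobson_bot _

theorem map_rename_jacobianIdeal {n : ℕ} (f : MvPowerSeries (Fin n) ℂ) :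
    (jacobianIdeal f).map (rename (R := ℂ) Fin.castSuccEmb) =
      Ideal.span (Set.range fun i => rename Fin.castSuccEmb (pderiv ℂ i f)) := by
  simp only [jacobianIdeal, psDeriv_eq_pderiv, Ideal.map_span, ← Set.range_comp]
  rfl

theorem pderiv_castSucc_rename_add_mul {R : Type*} [CommSemiring R] {n : ℕ} (i : Fin n)
    (f h : MvPowerSeries (Fin n) R) (t₀ : R) :
    pderiv R i.castSucc
        (rename Fin.castSuccEmb f + (C t₀ + X (Fin.last n)) * rename Fin.castSuccEmb h) =
      rename Fin.castSuccEmb (pderiv R i f) +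
        (C t₀ + X (Fin.last n)) * rename Fin.castSuccEmb (pderiv R i h) := by
  have hrename (g : MvPowerSeries (Fin n) R) :
      pderiv R i.castSucc (rename Fin.castSuccEmb g) = rename Fin.castSuccEmb (pderiv R i g) :=
    pderiv_rename Fin.castSuccEmb i g
  have hs : pderiv R i.castSucc (C t₀ + X (Fin.last n)) = 0 := by
    rw [map_add, pderiv_C, pderiv_X_of_ne (Fin.castSucc_lt_last i).ne', add_zero]
  rw [map_add, Derivation.leibniz, hs, hrename, hrename, smul_zero, add_zero, smul_eq_mul]

theorem stmt15_general (n : ℕ) (f : MvPowerSeries (Fin n) ℂ)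
    (μ : ℕ) (hjac : (maxIdeal n) ^ μ ≤ jacobianIdeal f)
    (N : ℕ) (hN : μ + 1 ≤ N)
    (h : MvPowerSeries (Fin n) ℂ) (hh : h ∈ (maxIdeal n) ^ (N + 1))
    (t₀ : ℂ) :
    ∀ F : MvPowerSeries (Fin (n + 1)) ℂ,
      F = liftPS f +
            (MvPowerSeries.C (σ := Fin (n + 1)) (R := ℂ) t₀ + MvPowerSeries.X (Fin.last n)) * liftPS h →
      Ideal.span (Set.range fun i : Fin n => psDeriv (Fin.castSucc i) F) =
        Ideal.span (Set.range fun i : Fin n => liftPS (psDeriv i f)) := by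
  rintro F rfl
  simp only [psDeriv_eq_pderiv, liftPS_eq_rename]
  refine Ideal.span_range_eq_of_sub_mem_jacobson_bot_mul fun i => ?_
  rw [pderiv_castSucc_rename_add_mul, add_sub_cancel_left]
  have hdh : pderiv ℂ i h ∈ maxIdeal n * jacobianIdeal f := by
    refine Ideal.mul_mono_right hjac ?_
    rw [← pow_succ']
    exact Ideal.pow_le_pow_right hN ((pderiv ℂ i).map_mem_pow_of_mem_pow_succ hh)
  refine Ideal.mul_mem_left _ _ (Ideal.mul_mono (map_rename_maxIdeal_le_jacobson_bot n)
    (map_rename_jacobianIdeal f).le ?_)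
  rw [← Ideal.map_mul]
  exact Ideal.mem_map_of_mem _ hdh

/-- let `f ∈ ℂ[[x₁,…,xₙ]]` and let `μ > 0` be such that `𝔪^μ ⊆ j(f)`. Let
`N ≥ μ + 1`, let `h ∈ 𝔪^{N+1}` and let `t₀ ∈ ℂ`. In `R = ℂ[[x₁,…,xₙ,s]]`, set
`F := f + (t₀ + s)·h`. Then the ideal of `R` generated by `∂F/∂x₁, …, ∂F/∂xₙ` equals the
extension ideal `j(f)·R`, i.e. the ideal of `R` generated by `∂f/∂x₁, …, ∂f/∂xₙ`. -/
theorem stmt15 (n : ℕ) (hn : 1 ≤ n) (f : MvPowerSeries (Fin n) ℂ)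
    (μ : ℕ) (hμ : 0 < μ) (hjac : (maxIdeal n) ^ μ ≤ jacobianIdeal f)
    (N : ℕ) (hN : μ + 1 ≤ N)
    (h : MvPowerSeries (Fin n) ℂ) (hh : h ∈ (maxIdeal n) ^ (N + 1))
    (t₀ : ℂ) :
    ∀ F : MvPowerSeries (Fin (n + 1)) ℂ,
      F = liftPS f +
            (MvPowerSeries.C (σ := Fin (n + 1)) (R := ℂ) t₀ + MvPowerSeries.X (Fin.last n)) * liftPS h →
      Ideal.span (Set.range fun i : Fin n => psDeriv (Fin.castSucc i) F) =
        Ideal.span (Set.range fun i : Fin n => liftPS (psDeriv i f)) :=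
  stmt15_general n f μ hjac N hN h hh t₀
end
end
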